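/- arXiv:1907.08050 — 2 statements merged into one kernel-verified Lean document; each statement's English description precedes it below -/
import Mathlib

section
/- If (Ш, →, ↠, ↪) is a (not necessarily finite) two-acyclic factorization system, then Pairs(→) is a well separated κ-lattice. Furthermore, writing L for Pairs(→), the system (Ш, →, ↠, ↪) is isomorphic to (JIrr^c(L), →_L, ↠_L, ↪_L). -/
namespace SDL

variable {S : Type*} {L : Type*}

/-- `X^⊥ = {y | x ↛ y for all x ∈ X}` -/
def perpR (r : S → S → Prop) (X : Set S) : Set S := {y | ∀ x ∈ X, ¬ r x y}

/-- `^⊥Y = {x | x ↛ y for all y ∈ Y}` -/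
def perpL (r : S → S → Prop) (Y : Set S) : Set S := {x | ∀ y ∈ Y, ¬ r x y}

/-- `(X, Y)` is a maximal orthogonal pair for `r`. -/
def IsMOP (r : S → S → Prop) (X Y : Set S) : Prop := Y = perpR r X ∧ X = perpL r Y

/-- The set of maximal orthogonal pairs. -/
def Pairs (r : S → S → Prop) : Type _ := {p : Set S × Set S // IsMOP r p.1 p.2}

/-- `Pairs r` is ordered by containment in the first component. -/
instance (r : S → S → Prop) : PartialOrder (Pairs r) where
  le p q := p.val.1 ⊆ q.val.1
  le_refl _ := Set.Subset.rfl
  le_trans _ _ _ h h' := Set.Subset.trans h h'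
  le_antisymm p q h h' := by
    apply Subtype.ext
    have h1 : p.val.1 = q.val.1 := subset_antisymm h h'
    have h2 : p.val.2 = q.val.2 := by rw [p.prop.1, q.prop.1, h1]
    exact Prod.ext h1 h2

/-- `x ↠ y` iff for all `z`, `y → z` implies `x → z`. -/
def Onto (r : S → S → Prop) (x y : S) : Prop := ∀ z, r y z → r x z

/-- `x ↪ y` iff for all `z`, `z → x` implies `z → y`. -/
def Into (r : S → S → Prop) (x y : S) : Prop := ∀ z, r z x → r z y

/-- `Mult ↠ ↪` relates `x` to `z` iff `x ↠ y ↪ z` for some `y`. -/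
def Mult (ont inj : S → S → Prop) (x z : S) : Prop := ∃ y, ont x y ∧ inj y z

/-- `(S, r, ont, inj)` is a factorization system. -/
structure IsFactSystem (r ont inj : S → S → Prop) : Prop where
  refl : ∀ x, r x x
  onto_iff : ∀ x y, ont x y ↔ Onto r x y
  into_iff : ∀ x y, inj x y ↔ Into r x y
  mult_iff : ∀ x z, r x z ↔ Mult ont inj x z

/-- A two-acyclic factorization system. -/
structure IsTwoAcyclicFS (r ont inj : S → S → Prop) extends IsFactSystem r ont inj : Prop where
  onto_antisymm : ∀ x y, ont x y → ont y x → x = y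
  into_antisymm : ∀ x y, inj x y → inj y x → x = y
  brick : ∀ x y, ont x y → inj y x → x = y

/-- `T(x) = {x' | x ↠ x'}`. -/
def Tset (ont : S → S → Prop) (x : S) : Set S := {x' | ont x x'}

/-- `F(x) = {x' | x' ↪ x}`. -/
def Fset (inj : S → S → Prop) (x : S) : Set S := {x' | inj x' x}

/-- Restriction of a relation to a subset. -/
def restrictRel (r : S → S → Prop) (D : Set S) : D → D → Prop := fun a b => r a b

/-- A subset is closed if it equals its closure `^⊥(X^⊥)`. -/
def IsClosedSet (r : S → S → Prop) (X : Set S) : Prop := perpL r (perpR r X) = X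

/-- The lattice of closed sets, ordered by containment. -/
abbrev Closeds (r : S → S → Prop) : Type _ := {X : Set S // IsClosedSet r X}

/-- `Del(X, c) = X \ {x ∈ X : x ↠ c}`. -/
def Del (ont : S → S → Prop) (X : Set S) (c : S) : Set S := X \ {x | ont x c}

/-- `Cov(X)`: those `c ∈ X` with `Del(X,c)` closed and the closure of `Del(X,c) ∪ {c}` equal
to `X`. -/
def CovS (r ont : S → S → Prop) (X : Set S) : Set S :=
  {c | c ∈ X ∧ IsClosedSet r (Del ont X c) ∧ perpL r (perpR r (Del ont X c ∪ {c})) = X}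

/-- Direct forcing: `x ⇝ y` iff `x` is `↠`-minimal in `F(y)` or `↪`-maximal in `T(y)`. -/
def Forces (ont inj : S → S → Prop) (x y : S) : Prop :=
  (inj x y ∧ ∀ x', inj x' y → ont x x' → x' = x) ∨
  (ont y x ∧ ∀ x', ont y x' → inj x' x → x' = x)

/-- `down X` for a partial order given as a relation (`r x y` meaning `x ≥ y`). -/
def dnRel (r : S → S → Prop) (X : Set S) : Set S := {y | ∃ x ∈ X, r x y}

/-- `up X` for a partial order given as a relation (`r x y` meaning `x ≥ y`). -/
def upRel (r : S → S → Prop) (X : Set S) : Set S := {y | ∃ x ∈ X, r y x}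

section OrderNotions

variable [PartialOrder L]

/-- Completely join-irreducible: there is `j⁎` such that `x < j ↔ x ≤ j⁎`. -/
def CJIrr (j : L) : Prop := ∃ j', ∀ x : L, x < j ↔ x ≤ j'

/-- Completely meet-irreducible: there is `j^*` such that `x > m ↔ x ≥ m^*`. -/
def CMIrr (m : L) : Prop := ∃ m', ∀ x : L, m < x ↔ m' ≤ x

/-- `k = κ(j)`: `k` is the greatest element of `{y | j ⊓ y = j⁎}`. -/
def IsKappa (j k : L) : Prop :=
  ∃ j', (∀ x : L, x < j ↔ x ≤ j') ∧ IsGreatest {y : L | IsGLB ({j, y} : Set L) j'} k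

/-- `k = κᵈ(m)`: `k` is the least element of `{x | m ⊔ x = m^*}`. -/
def IsKappad (m k : L) : Prop :=
  ∃ m', (∀ x : L, m < x ↔ m' ≤ x) ∧ IsLeast {x : L | IsLUB ({m, x} : Set L) m'} k

/-- `L` is a κ-lattice: complete, meet and join generated by irreducibles, with inverse
bijections `κ` and `κᵈ` between the completely join- and meet-irreducibles. -/
def IsKappaLattice (L : Type*) [PartialOrder L] : Prop :=
  (∀ s : Set L, ∃ a, IsLUB s a) ∧
  (∀ s : Set L, ∃ a, IsGLB s a) ∧
  (∀ x : L, IsLUB {j : L | CJIrr j ∧ j ≤ x} x) ∧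
  (∀ x : L, IsGLB {m : L | CMIrr m ∧ x ≤ m} x) ∧
  (∀ j : L, CJIrr j → ∃ k, IsKappa j k ∧ CMIrr k ∧ IsKappad k j) ∧
  (∀ m : L, CMIrr m → ∃ k, IsKappad m k ∧ CJIrr k ∧ IsKappa k m)

/-- Well separated: `z₁ ≰ z₂` implies some completely join-irreducible `j` has `j ≤ z₁` and
`κ(j) ≥ z₂`. -/
def WellSeparated (L : Type*) [PartialOrder L] : Prop :=
  ∀ z₁ z₂ : L, ¬ z₁ ≤ z₂ → ∃ j k : L, CJIrr j ∧ IsKappa j k ∧ j ≤ z₁ ∧ z₂ ≤ k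

/-- The set of completely join-irreducible elements, as a type. -/
abbrev JIrrC (L : Type*) [PartialOrder L] : Type _ := {j : L // CJIrr j}

/-- `i →_L j` iff `i ≰ κ(j)`. -/
def toL (i j : JIrrC L) : Prop := ∃ k : L, IsKappa (j : L) k ∧ ¬ (i : L) ≤ k

/-- `i ↠_L j` iff `i ≥ j` in `L`. -/
def ontoL (i j : JIrrC L) : Prop := (j : L) ≤ (i : L)

/-- `i ↪_L j` iff `κ(i) ≥ κ(j)` in `L`. -/
def intoL (i j : JIrrC L) : Prop :=
  ∃ ki kj : L, IsKappa (i : L) ki ∧ IsKappa (j : L) kj ∧ kj ≤ ki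

/-- A poset is a semidistributive lattice (order-theoretically): binary joins and meets exist,
and both semidistributive laws hold. -/
def IsSDLattice (L : Type*) [PartialOrder L] : Prop :=
  (∀ x y : L, ∃ s, IsLUB ({x, y} : Set L) s) ∧
  (∀ x y : L, ∃ s, IsGLB ({x, y} : Set L) s) ∧
  (∀ x y z sxy sxz myz : L, IsLUB ({x, y} : Set L) sxy → IsLUB ({x, z} : Set L) sxz →
    sxy = sxz → IsGLB ({y, z} : Set L) myz → IsLUB ({x, myz} : Set L) sxy) ∧
  (∀ x y z mxy mxz syz : L, IsGLB ({x, y} : Set L) mxy → IsGLB ({x, z} : Set L) mxz →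
    mxy = mxz → IsLUB ({y, z} : Set L) syz → IsGLB ({x, syz} : Set L) mxy)

/-- `s` is the canonical join representation of `x`. -/
def IsCanonicalJoinRep (s : Set L) (x : L) : Prop :=
  IsLUB s x ∧ (∀ s' : Set L, IsLUB s' x → ∀ a ∈ s, ∃ b ∈ s', a ≤ b) ∧
  IsAntichain (· ≤ ·) s

end OrderNotions

/-- Join semidistributivity. -/
def JoinSD (L : Type*) [Lattice L] : Prop :=
  ∀ x y z : L, x ⊔ y = x ⊔ z → x ⊔ (y ⊓ z) = x ⊔ y

/-- Meet semidistributivity. -/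
def MeetSD (L : Type*) [Lattice L] : Prop :=
  ∀ x y z : L, x ⊓ y = x ⊓ z → x ⊓ (y ⊔ z) = x ⊓ y

/-- Complete join semidistributivity. -/
def CompletelyJoinSD (L : Type*) [CompleteLattice L] : Prop :=
  ∀ (X : Set L) (y z : L), X.Nonempty → (∀ x ∈ X, x ⊔ y = z) → sInf X ⊔ y = z

/-- Complete meet semidistributivity. -/
def CompletelyMeetSD (L : Type*) [CompleteLattice L] : Prop :=
  ∀ (X : Set L) (y z : L), X.Nonempty → (∀ x ∈ X, x ⊓ y = z) → sSup X ⊓ y = z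

end SDL

namespace SDL

/-!
Each `x` gives the pair `jOf r x` generated by `{x}` on the left and the pair `mOf r x` generated
by `{x}` on the right: `jOf r x ≤ P ↔ x ∈ P.1`, `P ≤ mOf r y ↔ y ∈ P.2` and
`jOf r x ≤ mOf r y ↔ x ↛ y`, so they are join and meet dense. The factorization axioms identify
the left part of `jOf r x` with `{z | x ↠ z}` and give the key fact: if `x ∉ P.1`, a witness
`x → y ∈ P.2` factors as `x ↠ v ↪ y`, and then `v ∈ P.2`.
Two-acyclicity gives `z ↛ x` whenever `x ↠ z ≠ x`, so the pair generated by `{z | x ↠ z} \ {x}`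
is the lower cover of `jOf r x` and lies below `mOf r x`. By the key fact every `P ≱ jOf r x`
above this lower cover lies below `mOf r x`, that is `κ (jOf r x) = mOf r x`; dually
`κᵈ (mOf r x) = jOf r x`.
-/

section Kappa

variable {L : Type*} [PartialOrder L]

theorem CJIrr.mem_of_isLUB {j : L} {s : Set L} (hj : CJIrr j) (hs : IsLUB s j) : j ∈ s := by
  obtain ⟨j', hj'⟩ := hj
  by_contra hjs
  have hj's : j ≤ j' :=
    hs.2 fun x hx => (hj' x).1 ((hs.1 hx).lt_of_ne fun hxj => hjs (hxj ▸ hx))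
  exact ((hj' j').2 le_rfl).not_ge hj's

theorem CMIrr.mem_of_isGLB {m : L} {s : Set L} (hm : CMIrr m) (hs : IsGLB s m) : m ∈ s :=
  CJIrr.mem_of_isLUB (L := Lᵒᵈ) hm hs

theorem IsKappa.unique {j k k' : L} (hk : IsKappa j k) (hk' : IsKappa j k') : k = k' := by
  obtain ⟨j₁, hj₁, hk⟩ := hk
  obtain ⟨j₂, hj₂, hk'⟩ := hk'
  obtain rfl : j₁ = j₂ :=
    le_antisymm ((hj₂ j₁).1 ((hj₁ j₁).2 le_rfl)) ((hj₁ j₂).1 ((hj₂ j₂).2 le_rfl))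
  exact hk.unique hk'

theorem exists_isKappa_and_iff {j k : L} (hk : IsKappa j k) {p : L → Prop} :
    (∃ k', IsKappa j k' ∧ p k') ↔ p k :=
  ⟨fun ⟨_, hk', hp⟩ => hk'.unique hk ▸ hp, fun hp => ⟨k, hk, hp⟩⟩

theorem isKappa_of_forall {j j' k : L} (hj : ∀ x, x < j ↔ x ≤ j') (hjk : ¬ j ≤ k)
    (hj'k : j' ≤ k) (hmax : ∀ y, ¬ j ≤ y → j' ≤ y → y ≤ k) : IsKappa j k := by
  have hj'j : j' < j := (hj j').2 le_rfl
  refine ⟨j', hj, ⟨?_, fun x hx => ?_⟩, fun y hy => hmax y (fun hjy => ?_) (hy.1 (by simp))⟩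
  · simp [hj'j.le, hj'k]
  · have hxj : x ≤ j := hx (by simp)
    exact (hj x).1 (hxj.lt_of_ne fun hxj => hjk (hxj ▸ hx (by simp)))
  · exact hj'j.not_ge (hy.2 (by simp [hjy]))

theorem isKappad_of_forall {m m' k : L} (hm : ∀ x, m < x ↔ m' ≤ x) (hkm : ¬ k ≤ m)
    (hkm' : k ≤ m') (hmin : ∀ y, ¬ y ≤ m → y ≤ m' → k ≤ y) : IsKappad m k :=
  isKappa_of_forall (L := Lᵒᵈ) hm hkm hkm' hmin

end Kappa

-- `perpR r` and `perpL r` are definitionally `upperPolar` and `lowerPolar` of `fun x y => ¬ r x y`.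
section Polars

variable {S : Type*} (r : S → S → Prop)

theorem perpR_anti {A B : Set S} (hAB : A ⊆ B) : perpR r B ⊆ perpR r A :=
  upperPolar_anti _ hAB

theorem perpL_anti {A B : Set S} (hAB : A ⊆ B) : perpL r B ⊆ perpL r A :=
  lowerPolar_anti _ hAB

theorem subset_perpL_perpR (A : Set S) : A ⊆ perpL r (perpR r A) :=
  subset_lowerPolar_upperPolar _ A

theorem subset_perpR_perpL (B : Set S) : B ⊆ perpR r (perpL r B) :=
  subset_upperPolar_lowerPolar _ B

theorem perpR_perpL_perpR (A : Set S) : perpR r (perpL r (perpR r A)) = perpR r A :=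
  upperPolar_lowerPolar_upperPolar _ A

theorem perpL_perpR_perpL (B : Set S) : perpL r (perpR r (perpL r B)) = perpL r B :=
  lowerPolar_upperPolar_lowerPolar _ B

end Polars

namespace Pairs

variable {S : Type*} {r : S → S → Prop} {P Q : Pairs r} {x y : S}

theorem fst_eq (P : Pairs r) : P.1.1 = perpL r P.1.2 := P.2.2

theorem snd_eq (P : Pairs r) : P.1.2 = perpR r P.1.1 := P.2.1

theorem le_def : P ≤ Q ↔ P.1.1 ⊆ Q.1.1 := Iff.rfl

theorem le_iff_snd_subset : P ≤ Q ↔ Q.1.2 ⊆ P.1.2 := by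
  refine ⟨fun hPQ => ?_, fun hQP => ?_⟩
  · rw [P.snd_eq, Q.snd_eq]
    exact perpR_anti r hPQ
  · rw [le_def, P.fst_eq, Q.fst_eq]
    exact perpL_anti r hQP

theorem mem_fst_iff : x ∈ P.1.1 ↔ ∀ y ∈ P.1.2, ¬ r x y := by
  rw [P.fst_eq]
  rfl

theorem mem_snd_iff : y ∈ P.1.2 ↔ ∀ x ∈ P.1.1, ¬ r x y := by
  rw [P.snd_eq]
  rfl

theorem notMem_fst_iff : x ∉ P.1.1 ↔ ∃ y ∈ P.1.2, r x y := by
  simp only [mem_fst_iff, not_forall, not_not, exists_prop]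

theorem notMem_snd_iff : y ∉ P.1.2 ↔ ∃ x ∈ P.1.1, r x y := by
  simp only [mem_snd_iff, not_forall, not_not, exists_prop]

theorem not_rel_of_mem (hx : x ∈ P.1.1) (hy : y ∈ P.1.2) : ¬ r x y :=
  mem_snd_iff.1 hy x hx

variable (r) in
def ofFst (A : Set S) : Pairs r :=
  ⟨(perpL r (perpR r A), perpR r A), (perpR_perpL_perpR r A).symm, rfl⟩

variable (r) in
def ofSnd (B : Set S) : Pairs r :=
  ⟨(perpL r B, perpR r (perpL r B)), rfl, (perpL_perpR_perpL r B).symm⟩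

theorem subset_ofFst_fst (A : Set S) : A ⊆ (ofFst r A).1.1 :=
  subset_perpL_perpR r A

theorem subset_ofSnd_snd (B : Set S) : B ⊆ (ofSnd r B).1.2 :=
  subset_perpR_perpL r B

theorem ofFst_le_iff {A : Set S} : ofFst r A ≤ P ↔ A ⊆ P.1.1 := by
  refine ⟨(subset_ofFst_fst A).trans, fun hA => ?_⟩
  rw [le_def, P.fst_eq]
  exact perpL_anti r (P.snd_eq ▸ perpR_anti r hA)

theorem le_ofSnd_iff {B : Set S} : P ≤ ofSnd r B ↔ B ⊆ P.1.2 := by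
  rw [le_iff_snd_subset]
  refine ⟨(subset_ofSnd_snd B).trans, fun hB => ?_⟩
  rw [P.snd_eq]
  exact perpR_anti r (P.fst_eq ▸ perpL_anti r hB)

theorem le_ofFst_of_subset {A : Set S} (hA : P.1.1 ⊆ A) : P ≤ ofFst r A :=
  hA.trans (subset_ofFst_fst A)

theorem ofSnd_le_of_subset {B : Set S} (hB : P.1.2 ⊆ B) : ofSnd r B ≤ P :=
  le_iff_snd_subset.2 (hB.trans (subset_ofSnd_snd B))

theorem isLUB_ofFst_biUnion (s : Set (Pairs r)) : IsLUB s (ofFst r (⋃ P ∈ s, P.1.1)) :=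
  ⟨fun _ hP => le_ofFst_of_subset (Set.subset_biUnion_of_mem (u := fun P : Pairs r => P.1.1) hP),
    fun _ hQ => ofFst_le_iff.2 (Set.iUnion₂_subset fun _ hP => hQ hP)⟩

theorem isGLB_ofSnd_biUnion (s : Set (Pairs r)) : IsGLB s (ofSnd r (⋃ P ∈ s, P.1.2)) :=
  ⟨fun _ hP => ofSnd_le_of_subset (Set.subset_biUnion_of_mem (u := fun P : Pairs r => P.1.2) hP),
    fun _ hQ => le_ofSnd_iff.2 (Set.iUnion₂_subset fun _ hP => le_iff_snd_subset.1 (hQ hP))⟩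

variable (r) in
def jOf (x : S) : Pairs r := ofFst r {x}

variable (r) in
def mOf (y : S) : Pairs r := ofSnd r {y}

theorem jOf_le_iff : jOf r x ≤ P ↔ x ∈ P.1.1 :=
  ofFst_le_iff.trans Set.singleton_subset_iff

theorem le_mOf_iff : P ≤ mOf r y ↔ y ∈ P.1.2 :=
  le_ofSnd_iff.trans Set.singleton_subset_iff

theorem jOf_le_mOf_iff : jOf r x ≤ mOf r y ↔ ¬ r x y :=
  le_mOf_iff.trans <| by simp [jOf, ofFst, perpR]

theorem isLUB_image_jOf (P : Pairs r) : IsLUB (jOf r '' P.1.1) P :=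
  ⟨by rintro _ ⟨x, hx, rfl⟩; exact jOf_le_iff.2 hx,
    fun _ hQ x hx => jOf_le_iff.1 (hQ ⟨x, hx, rfl⟩)⟩

theorem isGLB_image_mOf (P : Pairs r) : IsGLB (mOf r '' P.1.2) P :=
  ⟨by rintro _ ⟨y, hy, rfl⟩; exact le_mOf_iff.2 hy,
    fun _ hQ => le_iff_snd_subset.2 fun y hy => le_mOf_iff.1 (hQ ⟨y, hy, rfl⟩)⟩

theorem exists_jOf_eq_of_cjirr (hP : CJIrr P) : ∃ x, jOf r x = P := by
  obtain ⟨x, -, hx⟩ := hP.mem_of_isLUB P.isLUB_image_jOf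
  exact ⟨x, hx⟩

theorem exists_mOf_eq_of_cmirr (hP : CMIrr P) : ∃ y, mOf r y = P := by
  obtain ⟨y, -, hy⟩ := hP.mem_of_isGLB P.isGLB_image_mOf
  exact ⟨y, hy⟩

variable (r) in
def jLower (ont : S → S → Prop) (x : S) : Pairs r := ofFst r (Tset ont x \ {x})

variable (r) in
def mUpper (inj : S → S → Prop) (x : S) : Pairs r := ofSnd r (Fset inj x \ {x})

end Pairs

open Pairs

namespace IsFactSystem

variable {S : Type*} {r ont inj : S → S → Prop} (h : IsFactSystem r ont inj)
  {P : Pairs r} {x y z : S}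
include h

theorem ont_trans (hxy : ont x y) (hyz : ont y z) : ont x z :=
  (h.onto_iff x z).2 fun w hw => (h.onto_iff x y).1 hxy w ((h.onto_iff y z).1 hyz w hw)

theorem inj_trans (hxy : inj x y) (hyz : inj y z) : inj x z :=
  (h.into_iff x z).2 fun w hw => (h.into_iff y z).1 hyz w ((h.into_iff x y).1 hxy w hw)

theorem mem_jOf_fst_iff : z ∈ (jOf r x).1.1 ↔ ont x z := by
  simp only [h.onto_iff, Onto, jOf, ofFst, perpL, perpR, Set.mem_ofPred_eq,
    Set.mem_singleton_iff, forall_eq, not_imp_not]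

theorem mem_mOf_snd_iff : z ∈ (mOf r x).1.2 ↔ inj z x := by
  simp only [h.into_iff, Into, mOf, ofSnd, perpL, perpR, Set.mem_ofPred_eq,
    Set.mem_singleton_iff, forall_eq, not_imp_not]

theorem jOf_le_jOf_iff : jOf r z ≤ jOf r x ↔ ont x z :=
  jOf_le_iff.trans h.mem_jOf_fst_iff

theorem mOf_le_mOf_iff : mOf r x ≤ mOf r z ↔ inj z x :=
  le_mOf_iff.trans h.mem_mOf_snd_iff

theorem mem_fst_of_ont (hx : x ∈ P.1.1) (hxy : ont x y) : y ∈ P.1.1 :=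
  jOf_le_iff.1 ((h.jOf_le_jOf_iff.2 hxy).trans (jOf_le_iff.2 hx))

theorem mem_snd_of_inj (hy : y ∈ P.1.2) (hxy : inj x y) : x ∈ P.1.2 :=
  le_mOf_iff.1 ((le_mOf_iff.2 hy).trans (h.mOf_le_mOf_iff.2 hxy))

theorem exists_ont_mem_snd (hx : x ∉ P.1.1) : ∃ v, ont x v ∧ v ∈ P.1.2 := by
  obtain ⟨y, hy, hxy⟩ := notMem_fst_iff.1 hx
  obtain ⟨v, hxv, hvy⟩ := (h.mult_iff x y).1 hxy
  exact ⟨v, hxv, h.mem_snd_of_inj hy hvy⟩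

theorem exists_inj_mem_fst (hy : y ∉ P.1.2) : ∃ u, inj u y ∧ u ∈ P.1.1 := by
  obtain ⟨x, hx, hxy⟩ := notMem_snd_iff.1 hy
  obtain ⟨u, hxu, huy⟩ := (h.mult_iff x y).1 hxy
  exact ⟨u, huy, h.mem_fst_of_ont hx hxu⟩

theorem jLower_le_jOf : jLower r ont x ≤ jOf r x :=
  ofFst_le_iff.2 fun _ hz => h.mem_jOf_fst_iff.2 hz.1

theorem mOf_le_mUpper : mOf r x ≤ mUpper r inj x :=
  le_ofSnd_iff.2 fun _ hz => h.mem_mOf_snd_iff.2 hz.1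

end IsFactSystem

namespace IsTwoAcyclicFS

variable {S : Type*} {r ont inj : S → S → Prop} (h : IsTwoAcyclicFS r ont inj)
  {P : Pairs r} {x y z : S}
include h

theorem not_rel_of_ont (hxz : ont x z) (hzx : z ≠ x) : ¬ r z x := by
  intro hr
  obtain ⟨w, hzw, hwx⟩ := (h.mult_iff z x).1 hr
  obtain rfl : x = w := h.brick x w (h.ont_trans hxz hzw) hwx
  exact hzx (h.onto_antisymm z x hzw hxz)

theorem not_rel_of_inj (hzx : inj z x) (hne : z ≠ x) : ¬ r x z := by
  intro hr
  obtain ⟨w, hxw, hwz⟩ := (h.mult_iff x z).1 hr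
  obtain rfl : x = w := h.brick x w hxw (h.inj_trans hwz hzx)
  exact hne (h.into_antisymm z x hzx hwz)

theorem jLower_le_mOf : jLower r ont x ≤ mOf r x :=
  le_mOf_iff.2 fun _ hz => h.not_rel_of_ont hz.1 hz.2

theorem jOf_le_mUpper : jOf r x ≤ mUpper r inj x :=
  jOf_le_iff.2 fun _ hz => h.not_rel_of_inj hz.1 hz.2

theorem jOf_not_le_mOf : ¬ jOf r x ≤ mOf r x :=
  fun hx => jOf_le_mOf_iff.1 hx (h.refl x)

theorem lt_jOf_iff : P < jOf r x ↔ P ≤ jLower r ont x := by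
  refine ⟨fun hP => le_ofFst_of_subset fun z hz => ⟨h.mem_jOf_fst_iff.1 (hP.le hz), ?_⟩,
    fun hP => (hP.trans h.jLower_le_jOf).lt_of_ne ?_⟩
  · rintro rfl
    exact hP.not_ge (jOf_le_iff.2 hz)
  · rintro rfl
    exact h.jOf_not_le_mOf (hP.trans h.jLower_le_mOf)

theorem mOf_lt_iff : mOf r x < P ↔ mUpper r inj x ≤ P := by
  refine ⟨fun hP => ofSnd_le_of_subset fun z hz =>
      ⟨h.mem_mOf_snd_iff.1 (le_iff_snd_subset.1 hP.le hz), ?_⟩,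
    fun hP => (h.mOf_le_mUpper.trans hP).lt_of_ne' ?_⟩
  · rintro rfl
    exact hP.not_ge (le_mOf_iff.2 hz)
  · rintro rfl
    exact h.jOf_not_le_mOf (h.jOf_le_mUpper.trans hP)

theorem cjirr_jOf (x : S) : CJIrr (jOf r x) :=
  ⟨_, fun _ => h.lt_jOf_iff⟩

theorem cmirr_mOf (x : S) : CMIrr (mOf r x) :=
  ⟨_, fun _ => h.mOf_lt_iff⟩

theorem isKappa_jOf_mOf (x : S) : IsKappa (jOf r x) (mOf r x) := by
  refine isKappa_of_forall (fun _ => h.lt_jOf_iff) h.jOf_not_le_mOf h.jLower_le_mOf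
    fun P hxP hP => le_mOf_iff.2 ?_
  obtain ⟨v, hxv, hv⟩ := h.exists_ont_mem_snd fun hx => hxP (jOf_le_iff.2 hx)
  by_contra hx
  have hvx : v ≠ x := by rintro rfl; exact hx hv
  exact not_rel_of_mem (hP (subset_ofFst_fst _ ⟨hxv, hvx⟩)) hv (h.refl v)

theorem isKappad_mOf_jOf (x : S) : IsKappad (mOf r x) (jOf r x) := by
  refine isKappad_of_forall (fun _ => h.mOf_lt_iff) h.jOf_not_le_mOf h.jOf_le_mUpper
    fun P hPx hP => jOf_le_iff.2 ?_
  obtain ⟨u, hux, hu⟩ := h.exists_inj_mem_fst fun hx => hPx (le_mOf_iff.2 hx)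
  by_contra hx
  have hux' : u ≠ x := by rintro rfl; exact hx hu
  exact not_rel_of_mem hu (le_iff_snd_subset.1 hP (subset_ofSnd_snd _ ⟨hux, hux'⟩)) (h.refl u)

theorem isKappaLattice : IsKappaLattice (Pairs r) := by
  refine ⟨fun s => ⟨_, isLUB_ofFst_biUnion s⟩, fun s => ⟨_, isGLB_ofSnd_biUnion s⟩,
    fun P => ?_, fun P => ?_, fun j hj => ?_, fun m hm => ?_⟩
  · refine P.isLUB_image_jOf.of_subset_of_superset isLUB_Iic ?_ fun _ hj => hj.2
    rintro _ ⟨x, hx, rfl⟩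
    exact ⟨h.cjirr_jOf x, jOf_le_iff.2 hx⟩
  · refine P.isGLB_image_mOf.of_subset_of_superset isGLB_Ici ?_ fun _ hm => hm.2
    rintro _ ⟨y, hy, rfl⟩
    exact ⟨h.cmirr_mOf y, le_mOf_iff.2 hy⟩
  · obtain ⟨x, rfl⟩ := exists_jOf_eq_of_cjirr hj
    exact ⟨_, h.isKappa_jOf_mOf x, h.cmirr_mOf x, h.isKappad_mOf_jOf x⟩
  · obtain ⟨x, rfl⟩ := exists_mOf_eq_of_cmirr hm
    exact ⟨_, h.isKappad_mOf_jOf x, h.cjirr_jOf x, h.isKappa_jOf_mOf x⟩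

theorem wellSeparated : WellSeparated (Pairs r) := by
  intro P Q hPQ
  obtain ⟨x, hxP, hxQ⟩ := Set.not_subset.1 hPQ
  obtain ⟨v, hxv, hvQ⟩ := h.exists_ont_mem_snd hxQ
  exact ⟨jOf r v, mOf r v, h.cjirr_jOf v, h.isKappa_jOf_mOf v,
    jOf_le_iff.2 (h.mem_fst_of_ont hxP hxv), le_mOf_iff.2 hvQ⟩

noncomputable def jOfEquiv : S ≃ JIrrC (Pairs r) :=
  Equiv.ofBijective (fun x => ⟨jOf r x, h.cjirr_jOf x⟩)
    ⟨fun x y hxy =>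
      have hxy : jOf r x = jOf r y := congrArg Subtype.val hxy
      h.onto_antisymm x y (h.jOf_le_jOf_iff.1 hxy.ge) (h.jOf_le_jOf_iff.1 hxy.le),
    fun j => (exists_jOf_eq_of_cjirr j.2).imp fun _ hx => Subtype.ext hx⟩

end IsTwoAcyclicFS

/-- Theorem 1.4: if `(Ш, →, ↠, ↪)` is a two-acyclic factorization system, then `Pairs(→)` is a
well separated κ-lattice, and the system is isomorphic to
`(JIrr^c(Pairs(→)), →_L, ↠_L, ↪_L)`. -/
theorem pairs_is_wellsep_kappa (S : Type u) (r ont inj : S → S → Prop)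
    (h : IsTwoAcyclicFS r ont inj) :
    IsKappaLattice (Pairs r) ∧ WellSeparated (Pairs r) ∧
    ∃ e : S ≃ JIrrC (Pairs r), ∀ x y : S,
      (r x y ↔ toL (e x) (e y)) ∧
      (ont x y ↔ ontoL (e x) (e y)) ∧
      (inj x y ↔ intoL (e x) (e y)) := by
  refine ⟨h.isKappaLattice, h.wellSeparated, h.jOfEquiv, fun x y => ⟨?_, ?_, ?_⟩⟩
  · show r x y ↔ ∃ k, IsKappa (jOf r y) k ∧ ¬ jOf r x ≤ k
    rw [exists_isKappa_and_iff (h.isKappa_jOf_mOf y), jOf_le_mOf_iff, not_not]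
  · exact h.jOf_le_jOf_iff.symm
  · show inj x y ↔ ∃ ki kj, IsKappa (jOf r x) ki ∧ IsKappa (jOf r y) kj ∧ kj ≤ ki
    simp only [exists_and_left, exists_isKappa_and_iff (h.isKappa_jOf_mOf x),
      exists_isKappa_and_iff (h.isKappa_jOf_mOf y)]
    exact h.mOf_le_mOf_iff.symm

end SDL
end

section
/- If L is a κ-lattice, then the map x ↦ ({j ∈ JIrr^c(L) : j ≤ x}, κᵈ({m ∈ MIrr^c(L) : m ≥ x})) is an order isomorphism from L to Pairs(→_L), with inverse (X,Y) ↦ ⋁X = ⋀(κ(Y)). Moreover, the system (JIrr^c(L), →_L, ↠_L, ↪_L) satisfies: Fact(→_L) = (↠_L, ↪_L), Mult(↠_L, ↪_L) ⊆ →_L, the relations ↠_L and ↪_L are partial orders, and the brick condition holds (i ↠_L j ↪_L i implies i = j); that is, it has all properties of a two-acyclic factorization system except that possibly Mult(↠_L, ↪_L) is strictly contained in →_L. -/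
namespace SDL

section Kappa

variable {L : Type*} [PartialOrder L]

theorem IsKappa.unique_s4 {j k₁ k₂ : L} (h₁ : IsKappa j k₁) (h₂ : IsKappa j k₂) : k₁ = k₂ := by
  obtain ⟨j₁, hj₁, hg₁⟩ := h₁
  obtain ⟨j₂, hj₂, hg₂⟩ := h₂
  obtain rfl : j₁ = j₂ :=
    le_antisymm ((hj₂ j₁).mp ((hj₁ j₁).mpr le_rfl)) ((hj₁ j₂).mp ((hj₂ j₂).mpr le_rfl))
  exact le_antisymm (hg₂.2 hg₁.1) (hg₁.2 hg₂.1)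

theorem IsKappad.unique_s4 {m k₁ k₂ : L} (h₁ : IsKappad m k₁) (h₂ : IsKappad m k₂) : k₁ = k₂ := by
  obtain ⟨m₁, hm₁, hg₁⟩ := h₁
  obtain ⟨m₂, hm₂, hg₂⟩ := h₂
  obtain rfl : m₁ = m₂ :=
    le_antisymm ((hm₁ m₂).mp ((hm₂ m₂).mpr le_rfl)) ((hm₂ m₁).mp ((hm₁ m₁).mpr le_rfl))
  exact le_antisymm (hg₁.2 hg₂.1) (hg₂.2 hg₁.1)

theorem IsKappa.not_le {j k : L} (h : IsKappa j k) : ¬ j ≤ k := by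
  obtain ⟨j', hj', hk, -⟩ := h
  intro hjk
  have hjj' : j ≤ j' := hk.2 (by simp [lowerBounds, hjk])
  exact lt_irrefl j (hjj'.trans_lt ((hj' j').mpr le_rfl))

theorem IsKappa.le_of_lt {j k x : L} (h : IsKappa j k) (hx : x < j) : x ≤ k := by
  obtain ⟨j', hj', hk, -⟩ := h
  exact ((hj' x).mp hx).trans (hk.1 (by simp))

end Kappa

namespace IsKappaLattice

variable {L : Type*} [PartialOrder L]

noncomputable def kappa (h : IsKappaLattice L) (j : JIrrC L) : L :=
  Classical.choose (h.2.2.2.2.1 j.1 j.2)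

theorem isKappa_kappa (h : IsKappaLattice L) (j : JIrrC L) : IsKappa (j : L) (h.kappa j) :=
  (Classical.choose_spec (h.2.2.2.2.1 j.1 j.2)).1

theorem cmIrr_kappa (h : IsKappaLattice L) (j : JIrrC L) : CMIrr (h.kappa j) :=
  (Classical.choose_spec (h.2.2.2.2.1 j.1 j.2)).2.1

theorem isKappad_kappa (h : IsKappaLattice L) (j : JIrrC L) : IsKappad (h.kappa j) (j : L) :=
  (Classical.choose_spec (h.2.2.2.2.1 j.1 j.2)).2.2

theorem exists_kappa_eq (h : IsKappaLattice L) {m : L} (hm : CMIrr m) : ∃ j, h.kappa j = m := by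
  obtain ⟨k, -, hk, hkm⟩ := h.2.2.2.2.2 m hm
  exact ⟨⟨k, hk⟩, (h.isKappa_kappa ⟨k, hk⟩).unique_s4 hkm⟩

theorem kappa_injective (h : IsKappaLattice L) : Function.Injective h.kappa := fun i j hij =>
  Subtype.ext ((h.isKappad_kappa i).unique_s4 (hij ▸ h.isKappad_kappa j))

theorem toL_iff (h : IsKappaLattice L) (i j : JIrrC L) : toL i j ↔ ¬ (i : L) ≤ h.kappa j :=
  ⟨fun ⟨_, hk, hik⟩ => (h.isKappa_kappa j).unique_s4 hk ▸ hik,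
    fun hik => ⟨_, h.isKappa_kappa j, hik⟩⟩

theorem intoL_iff (h : IsKappaLattice L) (i j : JIrrC L) : intoL i j ↔ h.kappa j ≤ h.kappa i :=
  ⟨fun ⟨_, _, hki, hkj, hle⟩ =>
    (h.isKappa_kappa i).unique_s4 hki ▸ (h.isKappa_kappa j).unique_s4 hkj ▸ hle,
    fun hle => ⟨_, _, h.isKappa_kappa i, h.isKappa_kappa j, hle⟩⟩

theorem le_of_forall_le_imp_le (h : IsKappaLattice L) {x y : L}
    (hxy : ∀ j : JIrrC L, (j : L) ≤ x → (j : L) ≤ y) : x ≤ y :=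
  (h.2.2.1 x).2 fun a ⟨ha, hax⟩ => hxy ⟨a, ha⟩ hax

theorem le_of_forall_le_kappa_imp (h : IsKappaLattice L) {x y : L}
    (hxy : ∀ j : JIrrC L, y ≤ h.kappa j → x ≤ h.kappa j) : x ≤ y :=
  (h.2.2.2.1 y).2 fun m ⟨hm, hym⟩ => by
    obtain ⟨j, rfl⟩ := h.exists_kappa_eq hm
    exact hxy j hym

theorem setOf_isKappad_eq (h : IsKappaLattice L) (x : L) :
    {j : JIrrC L | ∃ m : L, CMIrr m ∧ x ≤ m ∧ IsKappad m (j : L)} = {j | x ≤ h.kappa j} := by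
  ext j
  refine ⟨fun ⟨m, hm, hxm, hmj⟩ => ?_, fun hx => ⟨_, h.cmIrr_kappa j, hx, h.isKappad_kappa j⟩⟩
  obtain ⟨i, rfl⟩ := h.exists_kappa_eq hm
  obtain rfl : i = j := Subtype.ext ((h.isKappad_kappa i).unique_s4 hmj)
  exact hxm

theorem isLUB_image_setOf_le (h : IsKappaLattice L) (x : L) :
    IsLUB (Subtype.val '' {j : JIrrC L | (j : L) ≤ x}) x := by
  convert h.2.2.1 x using 1
  ext a
  exact ⟨fun ⟨j, hj, hja⟩ => hja ▸ ⟨j.2, hj⟩, fun ⟨ha, hax⟩ => ⟨⟨a, ha⟩, hax, rfl⟩⟩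

theorem isGLB_kappa (h : IsKappaLattice L) (x : L) :
    IsGLB {k : L | ∃ j ∈ {j : JIrrC L | x ≤ h.kappa j}, IsKappa (j : L) k} x := by
  convert h.2.2.2.1 x using 1
  ext k
  refine ⟨fun ⟨j, hj, hk⟩ => (h.isKappa_kappa j).unique_s4 hk ▸ ⟨h.cmIrr_kappa j, hj⟩, ?_⟩
  rintro ⟨hk, hxk⟩
  obtain ⟨j, rfl⟩ := h.exists_kappa_eq hk
  exact ⟨j, hxk, h.isKappa_kappa j⟩

theorem perpR_eq_of_isLUB (h : IsKappaLattice L) {X : Set (JIrrC L)} {s : L}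
    (hs : IsLUB (Subtype.val '' X) s) : perpR toL X = {j | s ≤ h.kappa j} := by
  ext j
  simp only [perpR, h.toL_iff, not_not]
  exact ⟨fun hX => hs.2 (Set.forall_mem_image.2 hX),
    fun hs' i hi => (hs.1 (Set.mem_image_of_mem _ hi)).trans hs'⟩

theorem perpL_setOf_le_kappa (h : IsKappaLattice L) (x : L) :
    perpL toL {j : JIrrC L | x ≤ h.kappa j} = {j : JIrrC L | (j : L) ≤ x} := by
  ext i
  simp only [perpL, h.toL_iff, not_not]
  exact ⟨h.le_of_forall_le_kappa_imp, fun hix j hxj => hix.trans hxj⟩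

theorem isMOP_setOf_le (h : IsKappaLattice L) (x : L) :
    IsMOP toL {j : JIrrC L | (j : L) ≤ x} {j | x ≤ h.kappa j} :=
  ⟨(h.perpR_eq_of_isLUB (h.isLUB_image_setOf_le x)).symm, (h.perpL_setOf_le_kappa x).symm⟩

/-- The embedding `x ↦ ({j | j ≤ x}, κᵈ{m | x ≤ m})` of `L` into `Pairs(→_L)`. -/
noncomputable def toPairs (h : IsKappaLattice L) : L ↪o Pairs (toL (L := L)) :=
  OrderEmbedding.ofMapLEIff
    (fun x => ⟨({j : JIrrC L | (j : L) ≤ x}, {j | x ≤ h.kappa j}), h.isMOP_setOf_le x⟩)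
    fun _ _ => ⟨h.le_of_forall_le_imp_le, fun hxy _ hj => le_trans hj hxy⟩

theorem toPairs_surjective (h : IsKappaLattice L) : Function.Surjective h.toPairs := by
  intro p
  obtain ⟨s, hs⟩ := h.1 (Subtype.val '' p.val.1)
  have hsnd : p.val.2 = {j | s ≤ h.kappa j} := p.prop.1.trans (h.perpR_eq_of_isLUB hs)
  have hfst : p.val.1 = {j : JIrrC L | (j : L) ≤ s} :=
    p.prop.2.trans (hsnd ▸ h.perpL_setOf_le_kappa s)
  exact ⟨s, Subtype.ext (Prod.ext hfst.symm hsnd.symm)⟩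

theorem ontoL_iff_onto (h : IsKappaLattice L) (i j : JIrrC L) :
    ontoL i j ↔ Onto (toL (L := L)) i j := by
  simp only [ontoL, Onto, h.toL_iff, not_imp_not]
  exact ⟨fun hji _ hi => hji.trans hi, h.le_of_forall_le_kappa_imp⟩

theorem intoL_iff_into (h : IsKappaLattice L) (i j : JIrrC L) :
    intoL i j ↔ Into (toL (L := L)) i j := by
  simp only [h.intoL_iff, Into, h.toL_iff, not_imp_not]
  exact ⟨fun hji _ hz => hz.trans hji, h.le_of_forall_le_imp_le⟩

theorem toL_of_mult (h : IsKappaLattice L) {i j : JIrrC L} (hij : Mult ontoL intoL i j) :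
    toL i j := by
  obtain ⟨k, hki, hjk⟩ := hij
  rw [h.intoL_iff] at hjk
  rw [h.toL_iff]
  exact fun hij => (h.isKappa_kappa k).not_le (hki.trans (hij.trans hjk))

theorem intoL_antisymm (h : IsKappaLattice L) {i j : JIrrC L} (hij : intoL i j)
    (hji : intoL j i) : i = j := by
  rw [h.intoL_iff] at hij hji
  exact h.kappa_injective (le_antisymm hji hij)

theorem brick (h : IsKappaLattice L) {i j : JIrrC L} (hij : ontoL i j) (hji : intoL j i) :
    i = j := by
  rw [h.intoL_iff] at hji
  by_contra hne
  have hlt : (j : L) < i := lt_of_le_of_ne hij fun hji' => hne (Subtype.ext hji'.symm)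
  exact (h.isKappa_kappa j).not_le (((h.isKappa_kappa i).le_of_lt hlt).trans hji)

end IsKappaLattice

/-- Theorem 1.5: if `L` is a κ-lattice, then
`x ↦ ({j ∈ JIrr^c : j ≤ x}, κᵈ({m ∈ MIrr^c : m ≥ x}))` is an isomorphism from `L` to
`Pairs(→_L)`, with inverse `(X,Y) ↦ ⋁X = ⋀κ(Y)`; moreover the system
`(JIrr^c(L), →_L, ↠_L, ↪_L)` has all the properties of a two-acyclic factorization system
except that possibly `Mult(↠_L, ↪_L) ⊊ →_L`. -/
theorem kappa_lattice_iso_pairs (L : Type u) [PartialOrder L] (h : IsKappaLattice L) :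
    (∃ e : L ≃o Pairs (toL (L := L)),
      (∀ x : L,
        (e x).val.1 = {j : JIrrC L | (j : L) ≤ x} ∧
        (e x).val.2 = {j : JIrrC L | ∃ m : L, CMIrr m ∧ x ≤ m ∧ IsKappad m (j : L)}) ∧
      (∀ p : Pairs (toL (L := L)),
        IsLUB (Subtype.val '' p.val.1) (e.symm p) ∧
        IsGLB {k : L | ∃ j ∈ p.val.2, IsKappa (j : L) k} (e.symm p))) ∧
    (∀ i j : JIrrC L, ontoL i j ↔ Onto (toL (L := L)) i j) ∧
    (∀ i j : JIrrC L, intoL i j ↔ Into (toL (L := L)) i j) ∧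
    (∀ i j : JIrrC L, Mult (ontoL (L := L)) (intoL (L := L)) i j → toL i j) ∧
    (∀ i : JIrrC L, ontoL i i) ∧
    (∀ i j k : JIrrC L, ontoL i j → ontoL j k → ontoL i k) ∧
    (∀ i j : JIrrC L, ontoL i j → ontoL j i → i = j) ∧
    (∀ i : JIrrC L, intoL i i) ∧
    (∀ i j k : JIrrC L, intoL i j → intoL j k → intoL i k) ∧
    (∀ i j : JIrrC L, intoL i j → intoL j i → i = j) ∧
    (∀ i j : JIrrC L, ontoL i j → intoL j i → i = j) := by
  let e := OrderIso.ofSurjective h.toPairs h.toPairs_surjective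
  refine ⟨⟨e, fun x => ⟨rfl, (h.setOf_isKappad_eq x).symm⟩, fun p => ?_⟩,
    h.ontoL_iff_onto, h.intoL_iff_into, fun _ _ => h.toL_of_mult, fun _ => le_rfl,
    fun _ _ _ hij hjk => le_trans hjk hij, fun _ _ hij hji => Subtype.ext (le_antisymm hji hij),
    fun i => (h.intoL_iff i i).2 le_rfl, fun i j k hij hjk => ?_, fun _ _ => h.intoL_antisymm,
    fun _ _ => h.brick⟩
  · obtain ⟨x, rfl⟩ := h.toPairs_surjective p
    rw [show e.symm (h.toPairs x) = x from e.symm_apply_apply x]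
    exact ⟨h.isLUB_image_setOf_le x, h.isGLB_kappa x⟩
  · rw [h.intoL_iff] at hij hjk ⊢
    exact hjk.trans hij

end SDL
end
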